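/- Let τ ∈ ℂ \ (1/2)ℤ (so q = exp(2πiτ) ≠ ±1) and let λ, α, ρ ∈ ℂ. Define the first order difference operator T on meromorphic functions on ℂ by (Tf)(z) = (q^{−ρ}/(q−q^{−1}))·[ (q^{ρ−1−iλ−z} − 1)(1 − q^{ρ+1+iλ+z})·f(z+2) − (q^{ρ+iλ−z} − 1)(1 − q^{ρ−iλ+z})·f(z) ]. Then a meromorphic function f on ℂ satisfies Tf = μ_α(ρ)·f (as meromorphic functions) if and only if f satisfies the first order difference equation f(z+2) = [ sin(π(−iλ−α−ρ+z)τ)·sin(π(−iλ+α+ρ+z)τ) / ( sin(π(iλ−ρ+1+z)τ)·sin(π(iλ+ρ+1+z)τ) ) ]·f(z). -/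

import Mathlib

noncomputable section

open Complex

/-- `q^u = exp(2πiτu)`. -/
def qpow (τ u : ℂ) : ℂ := Complex.exp (2 * (Real.pi : ℂ) * Complex.I * τ * u)

/-- The eigenvalue constant `μ_α(ρ) = ( q^ρ(1−q^α) + q^{−ρ}(1−q^{−α}) ) / (q − q^{−1})`. -/
def muEig (τ α ρ : ℂ) : ℂ :=
  (qpow τ ρ * (1 - qpow τ α) + qpow τ (-ρ) * (1 - qpow τ (-α))) / (qpow τ 1 - qpow τ (-1))

/-- The first order difference operator realizing `π_λ(Y_ρ)` for Koornwinder's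
twisted primitive element. -/
def twistOp (τ lam ρ : ℂ) (f : ℂ → ℂ) (z : ℂ) : ℂ :=
  (qpow τ (-ρ) / (qpow τ 1 - qpow τ (-1))) *
    ((qpow τ (ρ - 1 - Complex.I * lam - z) - 1) * (1 - qpow τ (ρ + 1 + Complex.I * lam + z)) *
        f (z + 2) -
      (qpow τ (ρ + Complex.I * lam - z) - 1) * (1 - qpow τ (ρ - Complex.I * lam + z)) * f z)

/-!
Since `q^u - 1 = 2i·q^{u/2}·sin(πuτ)`, after multiplying by `q^{-ρ}` the coefficient of
`f(z+2)` in `twistOp` is `-4·sin(π(iλ-ρ+1+z)τ)·sin(π(iλ+ρ+1+z)τ)`, and the coefficient of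
`f(z)`, moved to the right together with the numerator of `μ_α(ρ)`, is
`-4·sin(π(-iλ-α-ρ+z)τ)·sin(π(-iλ+α+ρ+z)τ)`. As `2τ ∉ ℤ` makes the common denominator
`q - q⁻¹` nonzero, the eigenvalue equation is the difference equation with its denominators
cleared, pointwise in `z`.
-/

section qpow

variable (τ : ℂ)

theorem qpow_add (u v : ℂ) : qpow τ (u + v) = qpow τ u * qpow τ v := by
  rw [qpow, qpow, qpow, ← Complex.exp_add]; ring_nf

theorem qpow_zero : qpow τ 0 = 1 := by simp [qpow]

theorem qpow_ne_zero (u : ℂ) : qpow τ u ≠ 0 := Complex.exp_ne_zero _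

theorem qpow_neg (u : ℂ) : qpow τ (-u) = (qpow τ u)⁻¹ :=
  eq_inv_of_mul_eq_one_left (by rw [← qpow_add, neg_add_cancel, qpow_zero])

theorem qpow_sub (u v : ℂ) : qpow τ (u - v) = qpow τ u / qpow τ v := by
  rw [sub_eq_add_neg, qpow_add, qpow_neg, div_eq_mul_inv]

theorem qpow_sub_one (u : ℂ) :
    qpow τ u - 1 = 2 * I * qpow τ (u / 2) * Complex.sin (Real.pi * u * τ) := by
  have hsq : qpow τ u = qpow τ (u / 2) ^ 2 := by rw [sq, ← qpow_add, add_halves]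
  have hexp : qpow τ (u / 2) = Complex.exp (Real.pi * u * τ * I) := by rw [qpow]; ring_nf
  have hinv : Complex.exp (-(Real.pi * u * τ) * I) * Complex.exp (Real.pi * u * τ * I) = 1 := by
    rw [← Complex.exp_add, neg_mul, neg_add_cancel, Complex.exp_zero]
  rw [hsq, hexp, Complex.sin]
  linear_combination hinv - Complex.exp (Real.pi * u * τ * I) *
    (Complex.exp (-(Real.pi * u * τ) * I) - Complex.exp (Real.pi * u * τ * I)) * I_sq

theorem qpow_sub_one_mul_qpow_sub_one (u v : ℂ) :
    (qpow τ u - 1) * (qpow τ v - 1) =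
      -4 * qpow τ ((u + v) / 2) * Complex.sin (Real.pi * u * τ) *
        Complex.sin (Real.pi * v * τ) := by
  rw [qpow_sub_one, qpow_sub_one, add_div, qpow_add]
  linear_combination (4 * qpow τ (u / 2) * qpow τ (v / 2) * Complex.sin (Real.pi * u * τ) *
    Complex.sin (Real.pi * v * τ)) * I_sq

variable {τ} in
theorem qpow_one_sub_qpow_neg_one_ne_zero (hτ : ∀ n : ℤ, 2 * τ ≠ n) :
    qpow τ 1 - qpow τ (-1) ≠ 0 := by
  intro h
  obtain ⟨n, hn⟩ : ∃ n : ℤ, 2 * Real.pi * I * τ * 2 = n * (2 * Real.pi * I) := by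
    rw [← Complex.exp_eq_one_iff, ← qpow, ← one_add_one_eq_two, qpow_add]
    nth_rw 2 [sub_eq_zero.mp h]
    rw [← qpow_add, add_neg_cancel, qpow_zero]
  exact hτ n (mul_right_cancel₀ Complex.two_pi_I_ne_zero (by linear_combination hn))

end qpow

section twistOp

variable (τ lam α ρ z : ℂ)

theorem qpow_neg_mul_twistOp_shift_coeff :
    qpow τ (-ρ) * ((qpow τ (ρ - 1 - I * lam - z) - 1) * (1 - qpow τ (ρ + 1 + I * lam + z))) =
      -4 * Complex.sin (Real.pi * (I * lam - ρ + 1 + z) * τ) *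
        Complex.sin (Real.pi * (I * lam + ρ + 1 + z) * τ) := by
  have h := qpow_sub_one_mul_qpow_sub_one τ (ρ - 1 - I * lam - z) (ρ + 1 + I * lam + z)
  rw [show (ρ - 1 - I * lam - z + (ρ + 1 + I * lam + z)) / 2 = ρ by ring,
    show (Real.pi : ℂ) * (ρ - 1 - I * lam - z) * τ = -(Real.pi * (I * lam - ρ + 1 + z) * τ) by
      ring,
    show (Real.pi : ℂ) * (ρ + 1 + I * lam + z) * τ = Real.pi * (I * lam + ρ + 1 + z) * τ by
      ring,
    Complex.sin_neg] at h
  rw [← neg_sub (qpow τ _) 1, mul_neg, h, qpow_neg]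
  field_simp [qpow_ne_zero]

theorem muEig_numer_add_qpow_neg_mul_twistOp_coeff :
    (qpow τ ρ * (1 - qpow τ α) + qpow τ (-ρ) * (1 - qpow τ (-α))) +
      qpow τ (-ρ) * ((qpow τ (ρ + I * lam - z) - 1) * (1 - qpow τ (ρ - I * lam + z))) =
      -4 * Complex.sin (Real.pi * (-(I * lam) - α - ρ + z) * τ) *
        Complex.sin (Real.pi * (-(I * lam) + α + ρ + z) * τ) := by
  have h := qpow_sub_one_mul_qpow_sub_one τ (-(I * lam) - α - ρ + z) (-(I * lam) + α + ρ + z)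
  rw [show (-(I * lam) - α - ρ + z + (-(I * lam) + α + ρ + z)) / 2 = z - I * lam by ring] at h
  refine mul_left_cancel₀ (qpow_ne_zero τ (z - I * lam)) ?_
  calc _ = (qpow τ (-(I * lam) - α - ρ + z) - 1) * (qpow τ (-(I * lam) + α + ρ + z) - 1) := by
        simp only [qpow_add, qpow_sub, qpow_neg]
        field_simp [qpow_ne_zero]
        ring
    _ = _ := by rw [h]; ring

variable {τ} in
theorem twistOp_eq_muEig_mul_iff (hτ : ∀ n : ℤ, 2 * τ ≠ n) (f : ℂ → ℂ) :
    twistOp τ lam ρ f z = muEig τ α ρ * f z ↔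
      Complex.sin (Real.pi * (I * lam - ρ + 1 + z) * τ) *
          Complex.sin (Real.pi * (I * lam + ρ + 1 + z) * τ) * f (z + 2) =
        Complex.sin (Real.pi * (-(I * lam) - α - ρ + z) * τ) *
          Complex.sin (Real.pi * (-(I * lam) + α + ρ + z) * τ) * f z := by
  have hshift := qpow_neg_mul_twistOp_shift_coeff τ lam ρ z
  have hconst := muEig_numer_add_qpow_neg_mul_twistOp_coeff τ lam α ρ z
  rw [twistOp, muEig, div_mul_eq_mul_div, div_mul_eq_mul_div,
    div_left_inj' (qpow_one_sub_qpow_neg_one_ne_zero hτ)]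
  constructor <;> intro h
  · linear_combination (-1 / 4 : ℂ) * h + (f (z + 2) / 4) * hshift - (f z / 4) * hconst
  · linear_combination -4 * h + f (z + 2) * hshift - f z * hconst

end twistOp

theorem twisted_primitive_eigenfunction_iff_general (τ : ℂ) (hτ : ∀ n : ℤ, 2 * τ ≠ (n : ℂ))
    (lam α ρ : ℂ) (f : ℂ → ℂ) :
    (∀ z : ℂ,
        Complex.sin ((Real.pi : ℂ) * (Complex.I * lam - ρ + 1 + z) * τ) ≠ 0 →
        Complex.sin ((Real.pi : ℂ) * (Complex.I * lam + ρ + 1 + z) * τ) ≠ 0 →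
        twistOp τ lam ρ f z = muEig τ α ρ * f z) ↔
    (∀ z : ℂ,
        Complex.sin ((Real.pi : ℂ) * (Complex.I * lam - ρ + 1 + z) * τ) ≠ 0 →
        Complex.sin ((Real.pi : ℂ) * (Complex.I * lam + ρ + 1 + z) * τ) ≠ 0 →
        f (z + 2) =
          (Complex.sin ((Real.pi : ℂ) * (-(Complex.I * lam) - α - ρ + z) * τ) *
              Complex.sin ((Real.pi : ℂ) * (-(Complex.I * lam) + α + ρ + z) * τ)) /
            (Complex.sin ((Real.pi : ℂ) * (Complex.I * lam - ρ + 1 + z) * τ) *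
              Complex.sin ((Real.pi : ℂ) * (Complex.I * lam + ρ + 1 + z) * τ)) * f z) := by
  refine forall_congr' fun z => imp_congr_right fun hS₁ => imp_congr_right fun hS₂ => ?_
  rw [twistOp_eq_muEig_mul_iff lam α ρ z hτ, div_mul_eq_mul_div,
    eq_div_iff (mul_ne_zero hS₁ hS₂), mul_comm (f (z + 2))]

/-- A meromorphic function `f` is an eigenfunction of `π_λ(Y_ρ)` with eigenvalue
`μ_α(ρ)` (as meromorphic functions, i.e. away from the zeros of the denominators)
if and only if it satisfies the first order difference equation
`f(z+2) = [sin(π(−iλ−α−ρ+z)τ)·sin(π(−iλ+α+ρ+z)τ) /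
  (sin(π(iλ−ρ+1+z)τ)·sin(π(iλ+ρ+1+z)τ))]·f(z)`. -/
theorem twisted_primitive_eigenfunction_iff (τ : ℂ) (hτ : ∀ n : ℤ, 2 * τ ≠ (n : ℂ))
    (lam α ρ : ℂ) (f : ℂ → ℂ) (hf : MeromorphicOn f Set.univ) :
    (∀ z : ℂ,
        Complex.sin ((Real.pi : ℂ) * (Complex.I * lam - ρ + 1 + z) * τ) ≠ 0 →
        Complex.sin ((Real.pi : ℂ) * (Complex.I * lam + ρ + 1 + z) * τ) ≠ 0 →
        twistOp τ lam ρ f z = muEig τ α ρ * f z) ↔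
    (∀ z : ℂ,
        Complex.sin ((Real.pi : ℂ) * (Complex.I * lam - ρ + 1 + z) * τ) ≠ 0 →
        Complex.sin ((Real.pi : ℂ) * (Complex.I * lam + ρ + 1 + z) * τ) ≠ 0 →
        f (z + 2) =
          (Complex.sin ((Real.pi : ℂ) * (-(Complex.I * lam) - α - ρ + z) * τ) *
              Complex.sin ((Real.pi : ℂ) * (-(Complex.I * lam) + α + ρ + z) * τ)) /
            (Complex.sin ((Real.pi : ℂ) * (Complex.I * lam - ρ + 1 + z) * τ) *
              Complex.sin ((Real.pi : ℂ) * (Complex.I * lam + ρ + 1 + z) * τ)) * f z) :=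
  twisted_primitive_eigenfunction_iff_general τ hτ lam α ρ f
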